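/- arXiv:1706.09572 — 6 statements merged into one kernel-verified Lean document; each statement's English description precedes it below -/
import Mathlib

section
/- For any finite group G and any normal subgroup N of G, the number of conjugacy classes of G is at most the number of conjugacy classes of N times the number of conjugacy classes of the quotient G/N. -/
open MulAction in
lemma nagao_orbits_le (K A B : Type) [Group K] [Finite K] [Finite A] [Finite B]
    [MulAction K A] [MulAction K B]
    (h : ∀ k : K, Nat.card (fixedBy A k) ≤ Nat.card (fixedBy B k)) :
    Nat.card (Quotient (orbitRel K A)) ≤ Nat.card (Quotient (orbitRel K B)) := by
  classical
  have : Fintype K := Fintype.ofFinite K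
  have : Fintype A := Fintype.ofFinite A
  have : Fintype B := Fintype.ofFinite B
  have hA := sum_card_fixedBy_eq_card_orbits_mul_card_group K A
  have hB := sum_card_fixedBy_eq_card_orbits_mul_card_group K B
  have hsum : (∑ k : K, Fintype.card (fixedBy A k)) ≤ ∑ k : K, Fintype.card (fixedBy B k) := by
    refine Finset.sum_le_sum fun k _ => ?_
    have := h k
    simpa [Nat.card_eq_fintype_card] using this
  rw [hA, hB] at hsum
  rw [Nat.card_eq_fintype_card, Nat.card_eq_fintype_card]
  exact Nat.le_of_mul_le_mul_right hsum Fintype.card_pos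

/-- Nagao's lemma: `k(G) ≤ k(N) · k(G/N)` for `N ⊴ G`. -/
theorem stmt_0 (G : Type) [Group G] [Finite G] (N : Subgroup G) [N.Normal] :
    Nat.card (ConjClasses G) ≤
      Nat.card (ConjClasses N) * Nat.card (ConjClasses (G ⧸ N)) := by
  classical
  set f : ConjClasses G → ConjClasses (G ⧸ N) := ConjClasses.map (QuotientGroup.mk' N) with hf
  have key : ∀ c : ConjClasses (G ⧸ N),
      Nat.card {d : ConjClasses G // f d = c} ≤ Nat.card (ConjClasses N) := by
    intro c
    obtain ⟨gbar, rfl⟩ := c.exists_rep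
    obtain ⟨g, rfl⟩ := QuotientGroup.mk_surjective gbar
    set K : Subgroup G := (Subgroup.centralizer {((g : G ⧸ N))}).comap (QuotientGroup.mk' N)
      with hK
    have hmemK : ∀ k : G, k ∈ K ↔ ((g : G ⧸ N)) * ((k : G ⧸ N)) = ((k : G ⧸ N)) * ((g : G ⧸ N)) := by
      intro k
      simp [hK, Subgroup.mem_comap, Subgroup.mem_centralizer_iff]
    set A : Type := {x : G // (x : G ⧸ N) = (g : G ⧸ N)} with hA
    set B : Type := {x : G // x ∈ N} with hB
    letI actA : MulAction ↥K A :=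
      { smul := fun k x => ⟨(k : G) * (x : G) * (k : G)⁻¹, by
          have hk := (hmemK (k : G)).mp k.2
          have hx : ((x : G) : G ⧸ N) = (g : G ⧸ N) := x.2
          show (((k : G) * (x : G) * (k : G)⁻¹ : G) : G ⧸ N) = (g : G ⧸ N)
          rw [QuotientGroup.mk_mul, QuotientGroup.mk_mul, QuotientGroup.mk_inv, hx, ← hk,
            mul_inv_cancel_right]⟩
        one_smul := fun x => Subtype.ext (by
          show ((1 : ↥K) : G) * (x : G) * ((1 : ↥K) : G)⁻¹ = (x : G)
          simp)
        mul_smul := fun k l x => Subtype.ext (by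
          show ((k * l : ↥K) : G) * (x : G) * ((k * l : ↥K) : G)⁻¹ =
            (k : G) * ((l : G) * (x : G) * (l : G)⁻¹) * (k : G)⁻¹
          push_cast
          group) }
    letI actB : MulAction ↥K B :=
      { smul := fun k x => ⟨(k : G) * (x : G) * (k : G)⁻¹, Subgroup.Normal.conj_mem ‹N.Normal› _ x.2 _⟩
        one_smul := fun x => Subtype.ext (by
          show ((1 : ↥K) : G) * (x : G) * ((1 : ↥K) : G)⁻¹ = (x : G)
          simp)
        mul_smul := fun k l x => Subtype.ext (by
          show ((k * l : ↥K) : G) * (x : G) * ((k * l : ↥K) : G)⁻¹ =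
            (k : G) * ((l : G) * (x : G) * (l : G)⁻¹) * (k : G)⁻¹
          push_cast
          group) }
    -- fixed point comparison
    have hfix : ∀ k : ↥K, Nat.card (MulAction.fixedBy A k) ≤ Nat.card (MulAction.fixedBy B k) := by
      intro k
      rcases isEmpty_or_nonempty (MulAction.fixedBy A k) with hE | ⟨⟨x₀, hx₀⟩⟩
      · simp [Nat.card_of_isEmpty]
      · have hx₀' : (k : G) * (x₀ : G) * (k : G)⁻¹ = (x₀ : G) :=
          congrArg Subtype.val hx₀
        refine Nat.card_le_card_of_injective
          (fun x => (⟨⟨(x₀ : G)⁻¹ * ((x : A) : G), ?_⟩, ?_⟩ : MulAction.fixedBy B k)) ?_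
        · rw [← QuotientGroup.eq_one_iff]
          rw [QuotientGroup.mk_mul, QuotientGroup.mk_inv]
          have h1 : ((x₀ : G) : G ⧸ N) = (g : G ⧸ N) := x₀.2
          have h2 : (((x : A) : G) : G ⧸ N) = (g : G ⧸ N) := (x : A).2
          rw [h1, h2, inv_mul_cancel]
        · have hx' : (k : G) * ((x : A) : G) * (k : G)⁻¹ = ((x : A) : G) :=
            congrArg Subtype.val x.2
          rw [MulAction.mem_fixedBy]
          refine Subtype.ext ?_
          show (k : G) * ((x₀ : G)⁻¹ * ((x : A) : G)) * (k : G)⁻¹ = (x₀ : G)⁻¹ * ((x : A) : G)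
          have hcalc : (k : G) * ((x₀ : G)⁻¹ * ((x : A) : G)) * (k : G)⁻¹ =
              ((k : G) * (x₀ : G) * (k : G)⁻¹)⁻¹ * ((k : G) * ((x : A) : G) * (k : G)⁻¹) := by
            group
          rw [hcalc, hx₀', hx']
        · intro x y hxy
          have h1 : (x₀ : G)⁻¹ * ((x : A) : G) = (x₀ : G)⁻¹ * ((y : A) : G) :=
            congrArg (Subtype.val ∘ Subtype.val) hxy
          have := mul_left_cancel h1
          exact Subtype.ext (Subtype.ext this)
    have step2 : Nat.card (Quotient (MulAction.orbitRel ↥K A)) ≤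
        Nat.card (Quotient (MulAction.orbitRel ↥K B)) :=
      nagao_orbits_le ↥K A B hfix
    -- fiber injects (via surjection from orbits) into orbits of A
    have step1 : Nat.card {d : ConjClasses G // f d = ConjClasses.mk ((g : G ⧸ N))} ≤
        Nat.card (Quotient (MulAction.orbitRel ↥K A)) := by
      refine Nat.card_le_card_of_surjective
        (Quotient.lift (fun x : A =>
          (⟨ConjClasses.mk (x : G), by
            have : f (ConjClasses.mk (x : G)) = ConjClasses.mk (((x : G) : G ⧸ N)) := rfl
            rw [this, x.2]⟩ : {d : ConjClasses G // f d = ConjClasses.mk ((g : G ⧸ N))}))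
          ?_) ?_
      · rintro a b ⟨k, hk⟩
        have hk' : (k : G) * (b : G) * (k : G)⁻¹ = (a : G) := congrArg Subtype.val hk
        refine Subtype.ext ?_
        exact ConjClasses.mk_eq_mk_iff_isConj.mpr (isConj_iff.mpr ⟨(k : G), hk'⟩).symm
      · rintro ⟨d, hd⟩
        obtain ⟨y, rfl⟩ := d.exists_rep
        have hd' : ConjClasses.mk ((y : G ⧸ N)) = ConjClasses.mk ((g : G ⧸ N)) := hd
        obtain ⟨hbar, hh⟩ := isConj_iff.mp (ConjClasses.mk_eq_mk_iff_isConj.mp hd')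
        obtain ⟨h, rfl⟩ := QuotientGroup.mk_surjective hbar
        refine ⟨Quotient.mk _ (⟨h * y * h⁻¹, ?_⟩ : A), ?_⟩
        · show (((h * y * h⁻¹ : G)) : G ⧸ N) = (g : G ⧸ N)
          rw [QuotientGroup.mk_mul, QuotientGroup.mk_mul, QuotientGroup.mk_inv]
          exact hh
        · refine Subtype.ext ?_
          exact ConjClasses.mk_eq_mk_iff_isConj.mpr (isConj_iff.mpr ⟨h, rfl⟩).symm
    -- orbits of B are at most the conjugacy classes of N
    have step3 : Nat.card (Quotient (MulAction.orbitRel ↥K B)) ≤ Nat.card (ConjClasses N) := by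
      have hwd : ∀ a b : ↥N, IsConj a b →
          (⟦(⟨(a : G), a.2⟩ : B)⟧ : Quotient (MulAction.orbitRel ↥K B)) = ⟦⟨(b : G), b.2⟩⟧ := by
        intro a b hab
        obtain ⟨u, hu⟩ := isConj_iff.mp hab
        have hmem : (u : G) ∈ K := by
          rw [hmemK]
          have : ((u : G) : G ⧸ N) = 1 := (QuotientGroup.eq_one_iff _).mpr u.2
          rw [this, mul_one, one_mul]
        have hrel : (⟨(b : G), b.2⟩ : B) ∈ MulAction.orbit ↥K (⟨(a : G), a.2⟩ : B) := by
          refine MulAction.mem_orbit_iff.mpr ⟨⟨(u : G), hmem⟩, ?_⟩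
          refine Subtype.ext ?_
          show (u : G) * (a : G) * (u : G)⁻¹ = (b : G)
          exact_mod_cast congrArg Subtype.val hu
        exact (Quotient.sound hrel).symm
      refine Nat.card_le_card_of_surjective
        (Quotient.lift (fun n : ↥N => (⟦(⟨(n : G), n.2⟩ : B)⟧ : Quotient (MulAction.orbitRel ↥K B)))
          (fun a b hab => hwd a b hab) : ConjClasses ↥N → Quotient (MulAction.orbitRel ↥K B)) ?_
      rintro ⟨b⟩
      exact ⟨ConjClasses.mk (⟨(b : G), b.2⟩ : ↥N), rfl⟩
    exact le_trans step1 (le_trans step2 step3)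
  -- sum over fibers
  have : Fintype (ConjClasses (G ⧸ N)) := Fintype.ofFinite _
  have : Fintype (ConjClasses G) := Fintype.ofFinite _
  haveI : ∀ c : ConjClasses (G ⧸ N), Fintype {d : ConjClasses G // f d = c} :=
    fun c => Fintype.ofFinite _
  calc Nat.card (ConjClasses G)
      = Nat.card (Σ c : ConjClasses (G ⧸ N), {d : ConjClasses G // f d = c}) :=
        (Nat.card_congr (Equiv.sigmaFiberEquiv f)).symm
    _ = ∑ c : ConjClasses (G ⧸ N), Nat.card {d : ConjClasses G // f d = c} := by
        rw [Nat.card_eq_fintype_card, Fintype.card_sigma]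
        exact Finset.sum_congr rfl fun c _ => (Nat.card_eq_fintype_card).symm
    _ ≤ ∑ _c : ConjClasses (G ⧸ N), Nat.card (ConjClasses N) :=
        Finset.sum_le_sum fun c _ => key c
    _ = Nat.card (ConjClasses N) * Nat.card (ConjClasses (G ⧸ N)) := by
        rw [Finset.sum_const, Finset.card_univ, smul_eq_mul, mul_comm,
          ← Nat.card_eq_fintype_card]
end

section
/- If G is a finite simple group of Lie type defined over a field of size p^f, and A ≤ Aut(G) satisfies gcd(|A|,|G|) = 1, then |A| ≤ f ≤ log₂|G|. -/
/-- For a finite simple group `G` of Lie type over a field of size `p ^ f`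
(encoded via the standard facts `|Out(G)| = d·f·g` where every prime divisor of `d`
divides `|G|`, `g ∣ 6` and `g ∣ |G|`, and `p ^ f ∣ |G|`), any `A ≤ Aut(G)` with
`(|A|, |G|) = 1` satisfies `|A| ≤ f ≤ log₂ |G|`. -/
theorem stmt_3 (G : Type) [Group G] [Finite G] (hG : IsSimpleGroup G)
    (hna : ¬ ∀ a b : G, a * b = b * a)
    (p f d g : ℕ) (hp : p.Prime) (hf : 1 ≤ f) (hpf : p ^ f ∣ Nat.card G)
    (hout : Nat.card (MulAut G ⧸ (MulAut.conj : G →* MulAut G).range) = d * f * g)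
    (hd : ∀ q : ℕ, q.Prime → q ∣ d → q ∣ Nat.card G)
    (hgdvd : g ∣ 6) (hgG : g ∣ Nat.card G)
    (A : Subgroup (MulAut G)) (hA : (Nat.card A).Coprime (Nat.card G)) :
    Nat.card A ≤ f ∧ (f : ℝ) ≤ Real.logb 2 (Nat.card G) := by
  have hGpos : 0 < Nat.card G := Nat.card_pos
  have hlog : (f : ℝ) ≤ Real.logb 2 (Nat.card G) := by
    have h2f : (2:ℕ) ^ f ≤ Nat.card G :=
      le_trans (Nat.pow_le_pow_left hp.two_le f) (Nat.le_of_dvd hGpos hpf)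
    have hR : ((2:ℝ)) ^ f ≤ (Nat.card G : ℝ) := by exact_mod_cast h2f
    calc (f:ℝ) = Real.logb 2 ((2:ℝ)^f) := by rw [Real.logb_pow]; simp
    _ ≤ Real.logb 2 (Nat.card G) :=
        (Real.logb_le_logb one_lt_two (by positivity) (by exact_mod_cast hGpos)).mpr hR
  refine ⟨?_, hlog⟩
  haveI hNn : ((MulAut.conj : G →* MulAut G).range).Normal := by
    constructor
    rintro _ ⟨x, rfl⟩ φ
    exact ⟨φ x, by ext y; simp [MulAut.conj_apply, mul_assoc]⟩
  have hNdvd : Nat.card (MulAut.conj : G →* MulAut G).range ∣ Nat.card G := by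
    have e := QuotientGroup.quotientKerEquivRange (MulAut.conj : G →* MulAut G)
    rw [← Nat.card_congr e.toEquiv]
    exact ⟨_, Subgroup.card_eq_card_quotient_mul_card_subgroup _⟩
  have hinj : Function.Injective
      ((QuotientGroup.mk' (MulAut.conj : G →* MulAut G).range).comp A.subtype) := by
    rw [← MonoidHom.ker_eq_bot_iff, eq_bot_iff]
    intro a ha
    have hmem : (a : MulAut G) ∈ (MulAut.conj : G →* MulAut G).range := by
      simpa [MonoidHom.mem_ker, QuotientGroup.eq_one_iff] using ha
    have h1 : orderOf a ∣ Nat.card A := orderOf_dvd_natCard a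
    have h2 : orderOf a ∣ Nat.card G := by
      have h3 := orderOf_dvd_natCard
        (⟨(a : MulAut G), hmem⟩ : (MulAut.conj : G →* MulAut G).range)
      rw [Subgroup.orderOf_mk, Subgroup.orderOf_coe] at h3
      exact h3.trans hNdvd
    have : orderOf a = 1 := Nat.eq_one_of_dvd_one (hA ▸ Nat.dvd_gcd h1 h2)
    simpa [Subgroup.mem_bot] using orderOf_eq_one_iff.mp this
  have hAdvd : Nat.card A ∣ d * f * g := by
    rw [← hout]; exact Subgroup.card_dvd_of_injective _ hinj
  have hcg : (Nat.card A).Coprime g := hA.coprime_dvd_right hgG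
  have hcd : (Nat.card A).Coprime d := by
    by_contra h
    obtain ⟨q, hq, hqd⟩ := Nat.exists_prime_and_dvd h
    exact hq.one_lt.ne' (Nat.eq_one_of_dvd_one (hA ▸ Nat.dvd_gcd
      (hqd.trans (Nat.gcd_dvd_left _ _))
      (hd q hq (hqd.trans (Nat.gcd_dvd_right _ _)))))
  have hdf : Nat.card A ∣ d * f := hcg.dvd_of_dvd_mul_right hAdvd
  rw [mul_comm] at hdf
  exact Nat.le_of_dvd (by omega) (hcd.dvd_of_dvd_mul_right hdf)
end

section
/- Let N be a normal subgroup of a finite group G. If k(G) = k(N) · k(G/N), then G = C_G(x) N for every x ∈ N. -/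
/-!
Conjugation by `N` permutes every coset `q` of `N`, and `n ∈ N` fixes at most `|C_N(n)|` points
of `q`, since two of its fixed points differ by an element of `C_N(n)`. Comparing Burnside's
lemma for this action with the one for `N` acting on itself, `N` has at most `k(N)` orbits on `q`.
Every class of `G` lying over the class of `q` in `G/N` meets `q` in a union of such orbits, so
at most `k(N)` classes of `G` lie over each class of `G/N`. Summing over the classes of `G/N`,
equality `k(G) = k(N) k(G/N)` forces exactly `k(N)` classes of `G` inside `N`; as each class of `N`
lies in one of them, `G`-conjugate elements of `N` are `N`-conjugate. Thus for `x ∈ N`, `g ∈ G`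
there is `n ∈ N` with `g x g⁻¹ = n x n⁻¹`, i.e. `n⁻¹ g ∈ C_G(x)`.
-/

open MulAction
open scoped Pointwise

theorem MulAction.card_orbitRel_quotient_le_of_card_fixedBy_le {H X Y : Type*} [Group H]
    [Finite H] [MulAction H X] [MulAction H Y] [Finite X] [Finite Y]
    (hle : ∀ h : H, Nat.card (fixedBy X h) ≤ Nat.card (fixedBy Y h)) :
    Nat.card (orbitRel.Quotient H X) ≤ Nat.card (orbitRel.Quotient H Y) := by
  classical
  have := Fintype.ofFinite H
  have := Fintype.ofFinite X
  have := Fintype.ofFinite Y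
  refine Nat.le_of_mul_le_mul_right ?_ (Nat.card_pos (α := H))
  simp only [Nat.card_eq_fintype_card]
  rw [← sum_card_fixedBy_eq_card_orbits_mul_card_group,
    ← sum_card_fixedBy_eq_card_orbits_mul_card_group]
  exact Finset.sum_le_sum fun h _ => by simpa only [Nat.card_eq_fintype_card] using hle h

theorem ConjAct.card_orbitRel_quotient (G : Type*) [Group G] :
    Nat.card (orbitRel.Quotient (ConjAct G) G) = Nat.card (ConjClasses G) := by
  have : orbitRel (ConjAct G) G = IsConj.setoid G := by
    ext a b
    rw [ConjAct.orbitRel_conjAct]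
    rfl
  rw [orbitRel.Quotient, this]
  rfl

theorem ConjAct.mem_fixedBy_iff {G : Type*} [Group G] (c : ConjAct G) (x : G) :
    x ∈ fixedBy G c ↔ Commute (ofConjAct c) x := by
  rw [mem_fixedBy, ConjAct.smul_def, mul_inv_eq_iff_eq_mul]
  rfl

theorem Nat.card_fiber_eq_of_card_eq_mul {α β : Type*} [Finite α] [Finite β] (f : α → β) {m : ℕ}
    (hle : ∀ b, Nat.card {a // f a = b} ≤ m) (hcard : Nat.card α = m * Nat.card β) (b : β) :
    Nat.card {a // f a = b} = m := by
  have := Fintype.ofFinite β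
  have hsum : ∑ b, Nat.card {a // f a = b} = ∑ _b : β, m := by
    rw [← Nat.card_sigma, Nat.card_congr (Equiv.sigmaFiberEquiv f), hcard, Finset.sum_const,
      smul_eq_mul, Finset.card_univ, Nat.card_eq_fintype_card, mul_comm]
  exact (Finset.sum_eq_sum_iff_of_le fun b _ => hle b).1 hsum b (Finset.mem_univ b)

section NormalSubgroup

variable {G : Type*} [Group G] (N : Subgroup G) [N.Normal]

abbrev QuotientGroup.Fiber (q : G ⧸ N) : Type _ := {x : G // (x : G ⧸ N) = q}

namespace QuotientGroup.Fiber

variable {N} {q : G ⧸ N}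

instance : SMul (ConjAct N) (Fiber N q) where
  smul c x := ⟨(ConjAct.ofConjAct c : N) * x.1 * ((ConjAct.ofConjAct c : N) : G)⁻¹, by
    rw [QuotientGroup.mk_mul_of_mem _ (inv_mem (ConjAct.ofConjAct c).2), QuotientGroup.mk_mul,
      (QuotientGroup.eq_one_iff _).2 (ConjAct.ofConjAct c).2, one_mul, x.2]⟩

theorem coe_smul (c : ConjAct N) (x : Fiber N q) :
    ((c • x : Fiber N q) : G) =
      (ConjAct.ofConjAct c : N) * x.1 * ((ConjAct.ofConjAct c : N) : G)⁻¹ :=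
  rfl

instance : MulAction (ConjAct N) (Fiber N q) where
  one_smul x := Subtype.ext (by simp [coe_smul])
  mul_smul c d x := Subtype.ext (by simp [coe_smul, mul_assoc])

theorem mem_fixedBy_iff (c : ConjAct N) (x : Fiber N q) :
    x ∈ fixedBy (Fiber N q) c ↔ Commute ((ConjAct.ofConjAct c : N) : G) x := by
  rw [mem_fixedBy, Subtype.ext_iff, coe_smul, mul_inv_eq_iff_eq_mul]
  rfl

theorem isConj_of_orbitRel {x y : Fiber N q} (h : orbitRel (ConjAct N) (Fiber N q) x y) :
    IsConj x.1 y.1 := by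
  obtain ⟨c, rfl⟩ := h
  exact (isConj_iff.2 ⟨_, (coe_smul c y).symm⟩).symm

variable [Finite G]

theorem card_fixedBy_le (c : ConjAct N) :
    Nat.card (fixedBy (Fiber N q) c) ≤ Nat.card (fixedBy N c) := by
  rcases isEmpty_or_nonempty (fixedBy (Fiber N q) c) with hempty | ⟨x₀, hx₀⟩
  · simp
  have hx₀ := (mem_fixedBy_iff c x₀).1 hx₀
  let f : fixedBy (Fiber N q) c → fixedBy N c := fun x =>
    ⟨⟨x₀.1⁻¹ * x.1.1, QuotientGroup.eq.1 (x₀.2.trans x.1.2.symm)⟩, by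
      rw [ConjAct.mem_fixedBy_iff, Commute, SemiconjBy, Subtype.ext_iff]
      exact hx₀.inv_right.mul_right ((mem_fixedBy_iff c x.1).1 x.2)⟩
  refine Nat.card_le_card_of_injective f fun x y hxy => ?_
  have : x₀.1⁻¹ * x.1.1 = x₀.1⁻¹ * y.1.1 := congrArg (fun z : fixedBy N c => (z.1 : G)) hxy
  exact Subtype.ext (Subtype.ext (mul_left_cancel this))

theorem card_orbitRel_quotient_le :
    Nat.card (orbitRel.Quotient (ConjAct N) (Fiber N q)) ≤ Nat.card (ConjClasses N) := by
  have : Finite (ConjAct N) := inferInstanceAs (Finite N)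
  rw [← ConjAct.card_orbitRel_quotient]
  exact card_orbitRel_quotient_le_of_card_fixedBy_le card_fixedBy_le

end QuotientGroup.Fiber

theorem QuotientGroup.card_conjClasses_fiber_le [Finite G] (Q : ConjClasses (G ⧸ N)) :
    Nat.card {c : ConjClasses G // ConjClasses.map (QuotientGroup.mk' N) c = Q} ≤
      Nat.card (ConjClasses N) := by
  obtain ⟨q, rfl⟩ := Q.exists_rep
  let f : orbitRel.Quotient (ConjAct N) (Fiber N q) →
      {c : ConjClasses G // ConjClasses.map (QuotientGroup.mk' N) c = ConjClasses.mk q} :=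
    Quotient.lift (fun x => ⟨ConjClasses.mk x.1, congrArg ConjClasses.mk x.2⟩)
      fun x y hxy => Subtype.ext (ConjClasses.mk_eq_mk_iff_isConj.2 (Fiber.isConj_of_orbitRel hxy))
  have hf : Function.Surjective f := by
    rintro ⟨c, hc⟩
    obtain ⟨y, rfl⟩ := c.exists_rep
    obtain ⟨t, ht⟩ := isConj_iff.1 (ConjClasses.mk_eq_mk_iff_isConj.1 hc)
    obtain ⟨t, rfl⟩ := QuotientGroup.mk_surjective t
    refine ⟨Quotient.mk _ ⟨t * y * t⁻¹, ht⟩, Subtype.ext ?_⟩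
    exact ConjClasses.mk_eq_mk_iff_isConj.2 (isConj_iff.2 ⟨t⁻¹, by group⟩)
  exact (Nat.card_le_card_of_surjective f hf).trans Fiber.card_orbitRel_quotient_le

theorem Subgroup.isConj_of_card_conjClasses_eq_mul [Finite G]
    (h : Nat.card (ConjClasses G) = Nat.card (ConjClasses N) * Nat.card (ConjClasses (G ⧸ N)))
    {a b : N} (hab : IsConj (a : G) b) : IsConj a b := by
  have hfiber := Nat.card_fiber_eq_of_card_eq_mul _ (QuotientGroup.card_conjClasses_fiber_le N) h
    (ConjClasses.mk 1)
  let ψ : ConjClasses N →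
      {c : ConjClasses G // ConjClasses.map (QuotientGroup.mk' N) c = ConjClasses.mk 1} :=
    fun c => ⟨ConjClasses.map N.subtype c, by
      obtain ⟨x, rfl⟩ := c.exists_rep
      exact congrArg ConjClasses.mk ((QuotientGroup.eq_one_iff _).2 x.2)⟩
  have hψ : Function.Surjective ψ := by
    rintro ⟨c, hc⟩
    obtain ⟨y, rfl⟩ := c.exists_rep
    have hy : (y : G ⧸ N) = 1 := isConj_one_left.1 (ConjClasses.mk_eq_mk_iff_isConj.1 hc)
    exact ⟨ConjClasses.mk ⟨y, (QuotientGroup.eq_one_iff y).1 hy⟩, rfl⟩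
  have hψ' : Function.Injective ψ :=
    ((Nat.bijective_iff_surjective_and_card ψ).2 ⟨hψ, hfiber.symm⟩).1
  exact ConjClasses.mk_eq_mk_iff_isConj.1
    (hψ' (Subtype.ext (ConjClasses.mk_eq_mk_iff_isConj.2 hab)))

theorem Subgroup.coe_centralizer_mul_eq_univ {x : G} (hx : x ∈ N)
    (h : ∀ g : G, IsConj (⟨x, hx⟩ : N) ⟨g * x * g⁻¹, ‹N.Normal›.conj_mem x hx g⟩) :
    (centralizer {x} : Set G) * (N : Set G) = Set.univ := by
  rw [← Subgroup.mul_normal, Subgroup.coe_eq_univ, Subgroup.eq_top_iff']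
  intro g
  obtain ⟨n, hn⟩ := isConj_iff.1 (h g)
  have hn : (n : G) * x * (n : G)⁻¹ = g * x * g⁻¹ := congrArg Subtype.val hn
  have hc : (n : G)⁻¹ * g ∈ centralizer {x} := by
    rw [mem_centralizer_singleton_iff, mul_assoc, show g * x = g * x * g⁻¹ * g by group, ← hn]
    group
  simpa using mul_mem (mem_sup_right n.2) (mem_sup_left hc)

end NormalSubgroup

/-- Gallagher's observation: if `k(G) = k(N) · k(G/N)` for `N ⊴ G`, then
`G = C_G(x) N` for every `x ∈ N`. -/
theorem stmt_7 (G : Type) [Group G] [Finite G] (N : Subgroup G) [N.Normal]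
    (h : Nat.card (ConjClasses G) =
      Nat.card (ConjClasses N) * Nat.card (ConjClasses (G ⧸ N))) :
    ∀ x ∈ N, (Subgroup.centralizer {x} : Set G) * (N : Set G) = Set.univ := fun _ hx =>
  N.coe_centralizer_mul_eq_univ hx fun g =>
    N.isConj_of_card_conjClasses_eq_mul h (isConj_iff.2 ⟨g, rfl⟩)
end

section
/- Let G be a π-separable group with O_{π'}(G) = 1. If a π-element g of G induces a class-preserving automorphism of N := O_{ππ'}(G), then g ∈ N. -/
open scoped Classical

/-- A natural number is a `π`-number if all of its prime divisors lie in `π`. -/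
def Nat.IsPiNumber (π : Set ℕ) (n : ℕ) : Prop := ∀ p : ℕ, p.Prime → p ∣ n → p ∈ π

/-- The `π`-part of a natural number: the largest divisor all of whose prime factors lie in `π`. -/
noncomputable def Nat.piPart (π : Set ℕ) (n : ℕ) : ℕ :=
  n.factorization.prod fun p k => if p ∈ π then p ^ k else 1

/-- `O_π(G)`: the subgroup generated by all normal `π`-subgroups of `G`
(for finite `G` this is the largest normal `π`-subgroup). -/
def Opi (π : Set ℕ) (G : Type*) [Group G] : Subgroup G :=
  Subgroup.normalClosure
    (⋃ N ∈ {N : Subgroup G | N.Normal ∧ Nat.IsPiNumber π (Nat.card N)}, (N : Set G))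

instance Opi.normal (π : Set ℕ) (G : Type*) [Group G] : (Opi π G).Normal :=
  Subgroup.normalClosure_normal

/-- `O_{ππ'}(G)`: the preimage in `G` of `O_{π'}(G / O_π(G))`. -/
def Opipi' (π : Set ℕ) (G : Type*) [Group G] : Subgroup G :=
  (Opi πᶜ (G ⧸ Opi π G)).comap (QuotientGroup.mk' (Opi π G))

/-- A group is `π`-separable if it has a normal series each of whose factors is a
`π`-group or a `π'`-group. -/
def IsPiSeparable (π : Set ℕ) (G : Type*) [Group G] : Prop :=
  ∃ (n : ℕ) (H : Fin (n + 1) → Subgroup G), Monotone H ∧ H 0 = ⊥ ∧ H (Fin.last n) = ⊤ ∧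
    (∀ i, (H i).Normal) ∧
    ∀ i : Fin n, Nat.IsPiNumber π ((H i.castSucc).relIndex (H i.succ)) ∨
      Nat.IsPiNumber πᶜ ((H i.castSucc).relIndex (H i.succ))

/-!
Pass to `Ḡ = G / O_π(G)`: there `O_π(Ḡ) = 1`, and `N` maps onto `F = O_{π'}(Ḡ)`. The image
of `g` induces a class-preserving automorphism `φ` of the `π'`-group `F` whose order is a
`π`-number. For each prime `p`, the `p`-part of `φ` generates a `p`-group acting on every
conjugacy class of `F`, a set of size prime to `p`, so it fixes a point of each class; its
fixed-point subgroup then meets every class of `F`, hence is `F`. So `φ = 1`, i.e. the image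
of `g` centralizes `F`.

It remains to see that `C_Ḡ(F) ≤ F` (Hall–Higman, Lemma 1.2.3). Walking up a `π`-separable
series `H_i`, suppose `C ∩ H_i ≤ F` where `C = C_Ḡ(F)`. Then `K = (C ∩ F)(C ∩ H_{i+1})` is
normal, has `Z = C ∩ F` in its centre, and `[K : Z]` divides `[H_{i+1} : H_i]`. If this
index is a `π'`-number, `K` is a normal `π'`-subgroup, so `K ≤ F`. If it is a `π`-number, the
transfer `K → Z` is `k ↦ k ^ [K : Z]`; its kernel is a normal `π`-subgroup, hence trivial, so
`|K| ≤ |Z|` and `K = Z ≤ F`.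
-/

namespace Nat.IsPiNumber

variable {π : Set ℕ} {m n : ℕ}

theorem one : Nat.IsPiNumber π 1 :=
  fun _ hp hdvd => absurd (Nat.dvd_one.mp hdvd) hp.ne_one

theorem of_dvd (hn : Nat.IsPiNumber π n) (h : m ∣ n) : Nat.IsPiNumber π m :=
  fun p hp hd => hn p hp (hd.trans h)

theorem mul (hm : Nat.IsPiNumber π m) (hn : Nat.IsPiNumber π n) : Nat.IsPiNumber π (m * n) :=
  fun p hp hd => (hp.dvd_mul.mp hd).elim (hm p hp) (hn p hp)

theorem card_of_forall_pow_eq_one {W : Type*} [Group W] [Finite W] (hm : Nat.IsPiNumber π m)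
    (h : ∀ w : W, w ^ m = 1) : Nat.IsPiNumber π (Nat.card W) := by
  intro p hp hdvd
  have := Fact.mk hp
  obtain ⟨w, hw⟩ := exists_prime_orderOf_dvd_card' p hdvd
  exact hm p hp (hw ▸ orderOf_dvd_of_pow_eq_one (h w))

end Nat.IsPiNumber

open Subgroup

section Lagrange

variable {G : Type*} [Group G]

theorem Subgroup.card_mul_relIndex {H K : Subgroup G} (h : H ≤ K) :
    Nat.card H * H.relIndex K = Nat.card K := by
  simpa [relIndex_bot_left] using relIndex_mul_relIndex ⊥ H K bot_le h

theorem Subgroup.relIndex_dvd_relIndex_of_le_right {H K L : Subgroup G} [H.Normal] (h : K ≤ L) :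
    H.relIndex K ∣ H.relIndex L := by
  rw [← relIndex_subgroupOf h]
  exact relIndex_dvd_index_of_normal _ _

theorem Subgroup.relIndex_sup_inf_dvd {Z M X Y : Subgroup G} [Z.Normal] [X.Normal]
    (h : M ⊓ X ≤ Z) : Z.relIndex (Z ⊔ (M ⊓ Y)) ∣ X.relIndex Y := by
  rw [relIndex_sup_left]
  calc Z.relIndex (M ⊓ Y) ∣ (M ⊓ X).relIndex (M ⊓ Y) := relIndex_dvd_of_le_left _ h
    _ = X.relIndex (M ⊓ Y) := by
      rw [← inf_relIndex_right (M ⊓ X), ← inf_relIndex_right X]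
      congr 1
      ext
      simp only [mem_inf]
      tauto
    _ ∣ X.relIndex Y := relIndex_dvd_relIndex_of_le_right inf_le_right

end Lagrange

section Opi

variable {π : Set ℕ} {G : Type*} [Group G]

theorem le_Opi {N : Subgroup G} (hN : N.Normal) (hcard : Nat.IsPiNumber π (Nat.card N)) :
    N ≤ Opi π G := fun _ hx =>
  subset_normalClosure (Set.mem_iUnion₂.mpr ⟨N, ⟨hN, hcard⟩, hx⟩)

theorem supClosed_normal_isPiNumber [Finite G] :
    SupClosed {N : Subgroup G | N.Normal ∧ Nat.IsPiNumber π (Nat.card N)} := by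
  rintro N ⟨hN, hNπ⟩ M ⟨hM, hMπ⟩
  refine ⟨sup_normal N M, ?_⟩
  rw [← card_mul_relIndex le_sup_right, relIndex_sup_right]
  exact hMπ.mul (hNπ.of_dvd (relIndex_dvd_card _ _))

theorem isPiNumber_card_Opi [Finite G] : Nat.IsPiNumber π (Nat.card (Opi π G)) := by
  set S := {N : Subgroup G | N.Normal ∧ Nat.IsPiNumber π (Nat.card N)}
  have hmax : sSup S ∈ S := supClosed_normal_isPiNumber.sSup_mem (Set.toFinite S)
    ⟨normal_bot, by simpa using Nat.IsPiNumber.one⟩ subset_rfl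
  have := hmax.1
  refine hmax.2.of_dvd (card_dvd_of_le (normalClosure_le_normal ?_))
  intro x hx
  obtain ⟨N, hN, hxN⟩ := Set.mem_iUnion₂.mp hx
  exact le_sSup hN hxN

variable (π G) in
theorem Opi_quotient_Opi_eq_bot [Finite G] : Opi π (G ⧸ Opi π G) = ⊥ := by
  have hsurj := QuotientGroup.mk'_surjective (Opi π G)
  set N := (Opi π (G ⧸ Opi π G)).comap (QuotientGroup.mk' (Opi π G))
  have hker : Opi π G ≤ N := by
    simpa only [QuotientGroup.ker_mk'] using (QuotientGroup.mk' (Opi π G)).ker_le_comap (Opi π _)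
  have hN : Nat.IsPiNumber π (Nat.card N) := by
    rw [← card_mul_relIndex hker]
    nth_rw 2 [← QuotientGroup.ker_mk' (Opi π G)]
    rw [relIndex_ker, map_comap_eq_self_of_surjective hsurj]
    exact isPiNumber_card_Opi.mul isPiNumber_card_Opi
  have hNle : N ≤ Opi π G := le_Opi (Normal.comap (Opi.normal _ _) _) hN
  rw [eq_bot_iff, ← map_comap_eq_self_of_surjective hsurj (Opi π _)]
  rintro _ ⟨x, hx, rfl⟩
  exact (QuotientGroup.eq_one_iff x).mpr (hNle hx)

end Opi

section Separable

variable {π : Set ℕ} {G G' : Type*} [Group G] [Group G']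

theorem Subgroup.relIndex_map_dvd (f : G →* G') {H K : Subgroup G}
    (hHK : H ≤ K) : (H.map f).relIndex (K.map f) ∣ H.relIndex K := by
  have hmap : (H.map f).subgroupOf (K.map f) = (H.subgroupOf K).map (f.subgroupMap K) := by
    ext ⟨y, hy⟩
    simp only [mem_subgroupOf, mem_map]
    constructor
    · rintro ⟨x, hx, rfl⟩
      exact ⟨⟨x, hHK hx⟩, hx, rfl⟩
    · rintro ⟨⟨x, _⟩, hx, hfx⟩
      exact ⟨x, hx, congrArg Subtype.val hfx⟩
  rw [relIndex, relIndex, hmap]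
  exact index_map_dvd _ (f.subgroupMap_surjective K)

theorem IsPiSeparable.of_surjective {f : G →* G'} (hf : Function.Surjective f)
    (h : IsPiSeparable π G) : IsPiSeparable π G' := by
  obtain ⟨n, H, hmono, h0, htop, hnorm, hfac⟩ := h
  refine ⟨n, fun i => (H i).map f, fun i j hij => map_mono (hmono hij), ?_, ?_,
    fun i => (hnorm i).map f hf, fun i => ?_⟩
  · simp only [h0, Subgroup.map_bot]
  · simp only [htop, map_top_of_surjective f hf]
  · have hdvd := relIndex_map_dvd f (hmono (Fin.castSucc_le_succ i))
    exact (hfac i).imp (·.of_dvd hdvd) (·.of_dvd hdvd)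

end Separable

section ClassPreserving

variable {F : Type*} [Group F]

variable (F) in
def MulAut.classPreserving : Subgroup (MulAut F) where
  carrier := {φ | ∀ x, IsConj x (φ x)}
  mul_mem' {φ ψ} hφ hψ x := (hψ x).trans (hφ (ψ x))
  one_mem' x := IsConj.refl x
  inv_mem' {φ} hφ x := by simpa using (hφ (φ⁻¹ x)).symm

theorem Subgroup.eq_top_of_forall_exists_isConj_mem [Finite F] (H : Subgroup F)
    (h : ∀ x, ∃ y ∈ H, IsConj x y) : H = ⊤ := by
  classical
  have := Fintype.ofFinite F
  have := Fintype.ofFinite (F ⧸ H)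
  -- Each `x ≠ 1` is `q h q⁻¹` with `q` a coset representative and `h ∈ H \ {1}`,
  -- so `|F| - 1 ≤ [F : H] (|H| - 1) = |F| - [F : H]`.
  let c : (F ⧸ H) × H → F := fun q => q.1.out * q.2 * q.1.out⁻¹
  have hcover : Finset.univ.erase (1 : F) ⊆
      (Finset.univ ×ˢ Finset.univ.erase (1 : H)).image c := by
    intro x hx
    obtain ⟨y, hy, hxy⟩ := h x
    obtain ⟨g, rfl⟩ := isConj_iff.mp hxy
    obtain ⟨k, hk⟩ := QuotientGroup.mk_out_eq_mul H g⁻¹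
    have hmem : k⁻¹ * (g * x * g⁻¹) * k ∈ H := H.mul_mem (H.mul_mem (H.inv_mem k.2) hy) k.2
    have hc : c (QuotientGroup.mk g⁻¹, ⟨_, hmem⟩) = x := by
      simp only [c, hk, coe_inv]
      group
    refine Finset.mem_image.mpr ⟨_, ?_, hc⟩
    simp only [Finset.mem_product, Finset.mem_univ, Finset.mem_erase, ne_eq, true_and, and_true]
    rintro h1
    rw [← hc, h1] at hx
    simp [c] at hx
  have hcount : Fintype.card F - 1 ≤ Fintype.card (F ⧸ H) * (Fintype.card H - 1) := by
    simpa [Finset.card_erase_of_mem] using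
      (Finset.card_le_card hcover).trans Finset.card_image_le
  have hcard : Fintype.card F = Fintype.card (F ⧸ H) * Fintype.card H := by
    simpa [Nat.card_eq_fintype_card] using (card_eq_card_quotient_mul_card_subgroup H)
  have hH : 0 < Fintype.card H := Fintype.card_pos
  have hq : Fintype.card (F ⧸ H) ≤ 1 := by
    rw [Nat.mul_sub_one, ← hcard] at hcount
    have : Fintype.card (F ⧸ H) ≤ Fintype.card F := hcard ▸ Nat.le_mul_of_pos_right _ hH
    omega
  rw [← index_eq_one, index_eq_card, Nat.card_eq_fintype_card]
  exact le_antisymm hq Fintype.card_pos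

namespace MulAut

theorem exists_isConj_forall_apply_eq_of_isPGroup {p : ℕ} [Fact p.Prime]
    {P : Subgroup (MulAut F)} (hP : IsPGroup p P) (hPc : P ≤ classPreserving F)
    (hp : ¬ p ∣ Nat.card F) (x : F) : ∃ y, IsConj x y ∧ ∀ φ ∈ P, φ y = y := by
  let X : SubMulAction P F :=
    { carrier := MulAction.orbit (ConjAct F) x
      smul_mem' := fun φ y hy => ConjAct.mem_orbit_conjAct.mpr
        ((hPc φ.2 y).symm.trans (ConjAct.mem_orbit_conjAct.mp hy)) }
  have hX : Nat.card X ∣ Nat.card F := by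
    have : Nat.card X = (MulAction.stabilizer (ConjAct F) x).index :=
      Nat.card_congr (MulAction.orbitEquivQuotientStabilizer (ConjAct F) x)
    rw [this, Nat.card_congr ConjAct.toConjAct.toEquiv]
    exact index_dvd_card _
  obtain ⟨⟨y, hy⟩, hfix⟩ :=
    hP.nonempty_fixed_point_of_prime_not_dvd_card X fun h => hp (h.trans hX)
  exact ⟨y, (ConjAct.mem_orbit_conjAct.mp hy).symm,
    fun φ hφ => congrArg Subtype.val (hfix ⟨φ, hφ⟩)⟩

theorem eq_one_of_mem_classPreserving_of_orderOf_eq_prime_pow [Finite F] {p k : ℕ}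
    [Fact p.Prime] {φ : MulAut F} (hφ : φ ∈ classPreserving F) (hord : orderOf φ = p ^ k)
    (hp : ¬ p ∣ Nat.card F) : φ = 1 := by
  have hP : IsPGroup p (zpowers φ) := IsPGroup.of_card (by rw [Nat.card_zpowers, hord])
  have hfix : MonoidHom.eqLocus φ.toMonoidHom (MonoidHom.id F) = ⊤ := by
    refine eq_top_of_forall_exists_isConj_mem _ fun x => ?_
    obtain ⟨y, hxy, hy⟩ :=
      exists_isConj_forall_apply_eq_of_isPGroup hP (zpowers_le.mpr hφ) hp x
    exact ⟨y, hy φ (mem_zpowers φ), hxy⟩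
  ext x
  exact eq_top_iff.mp hfix (mem_top x)

theorem eq_one_of_mem_classPreserving [Finite F] {π : Set ℕ} {φ : MulAut F}
    (hφ : φ ∈ classPreserving F) (hord : Nat.IsPiNumber π (orderOf φ))
    (hF : Nat.IsPiNumber πᶜ (Nat.card F)) : φ = 1 := by
  set n := orderOf φ
  have hn : n ≠ 0 := (orderOf_pos φ).ne'
  by_contra hne
  obtain ⟨p, hp, hpn⟩ := Nat.exists_prime_and_dvd (orderOf_eq_one_iff.not.mpr hne)
  have := Fact.mk hp
  have hpow : φ ^ (n / p ^ n.factorization p) = 1 :=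
    eq_one_of_mem_classPreserving_of_orderOf_eq_prime_pow (pow_mem hφ _)
      (orderOf_pow_orderOf_div hn (Nat.ordProj_dvd n p)) (fun h => hF p hp h (hord p hp hpn))
  exact Nat.not_dvd_ordCompl hp hn (hpn.trans (orderOf_dvd_of_pow_eq_one hpow))

theorem conjNormal_mem_classPreserving_of_surjective {G G' : Type*} [Group G] [Group G']
    {f : G →* G'} (hf : Function.Surjective f) {N : Subgroup G'} [N.Normal] {g : G}
    (hg : ∀ x ∈ N.comap f, ∃ n ∈ N.comap f, g * x * g⁻¹ = n * x * n⁻¹) :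
    conjNormal (f g) ∈ classPreserving N := by
  rintro ⟨y, hy⟩
  obtain ⟨x, rfl⟩ := hf y
  obtain ⟨n, hn, hconj⟩ := hg x hy
  refine isConj_iff.mpr ⟨⟨f n, hn⟩, Subtype.ext ?_⟩
  simpa [conjNormal_apply] using (congrArg f hconj).symm

end MulAut

end ClassPreserving

open scoped IsMulCommutative in
theorem Subgroup.exists_monoidHom_eq_pow_index_of_le_center {K : Type*} [Group K] (Z : Subgroup K)
    [Z.FiniteIndex] (hZ : Z ≤ center K) : ∃ τ : K →* Z, ∀ k, (τ k : K) = k ^ Z.index := by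
  have : IsMulCommutative Z :=
    le_centralizer_iff_isMulCommutative.mp (hZ.trans (center_le_centralizer (Z : Set K)))
  refine ⟨MonoidHom.transfer (MonoidHom.id Z), fun k => ?_⟩
  rw [MonoidHom.transfer_eq_pow _ k fun n g₀ hk => ?_]
  · rfl
  · calc g₀⁻¹ * k ^ n * g₀ = g₀ * (g₀⁻¹ * k ^ n * g₀) * g₀⁻¹ := by
          rw [mem_center_iff.mp (hZ hk) g₀, mul_inv_cancel_right]
      _ = k ^ n := by group

section HallHigman

variable {π : Set ℕ} {G : Type*} [Group G] [Finite G]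

theorem le_of_le_centralizer_of_isPiNumber_relIndex (hbot : Opi π G = ⊥) {Z K : Subgroup G}
    [K.Normal] (hZK : Z ≤ K) (hKZ : K ≤ centralizer Z)
    (hidx : Nat.IsPiNumber π (Z.relIndex K)) : K ≤ Z := by
  obtain ⟨τ, hτ⟩ := (Z.subgroupOf K).exists_monoidHom_eq_pow_index_of_le_center fun z hz =>
    mem_center_iff.mpr fun k => Subtype.ext ((mem_centralizer_iff.mp (hKZ k.2)) z hz).symm
  have hker : ∀ k : K, k ∈ τ.ker ↔ (k : G) ^ Z.relIndex K = 1 := fun k => by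
    rw [MonoidHom.mem_ker, ← OneMemClass.coe_eq_one, hτ, ← OneMemClass.coe_eq_one,
      SubgroupClass.coe_pow]
    rfl
  set W := τ.ker.map K.subtype
  have hW : W.Normal := by
    refine ⟨fun w hw g => ?_⟩
    obtain ⟨k, hk, rfl⟩ := hw
    refine ⟨⟨g * k * g⁻¹, Normal.conj_mem inferInstance _ k.2 g⟩, ?_, rfl⟩
    rw [SetLike.mem_coe, hker] at hk ⊢
    simp [conj_pow, hk]
  have hWπ : Nat.IsPiNumber π (Nat.card W) := by
    refine hidx.card_of_forall_pow_eq_one fun ⟨w, hw⟩ => ?_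
    obtain ⟨k, hk, rfl⟩ := hw
    exact Subtype.ext ((hker k).mp hk)
  have hinj : Function.Injective τ := by
    refine (injective_iff_map_eq_one τ).mpr fun k hk => Subtype.ext ?_
    simpa [hbot] using le_Opi hW hWπ (mem_map_of_mem K.subtype hk)
  refine (eq_of_le_of_card_ge hZK ?_).ge
  calc Nat.card K ≤ Nat.card (Z.subgroupOf K) := Nat.card_le_card_of_injective τ hinj
    _ = Nat.card Z := Nat.card_congr (subgroupOfEquivOfLe hZK).toEquiv

theorem centralizer_inf_le_Opi_compl (hbot : Opi π G = ⊥) {X Y : Subgroup G} [X.Normal]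
    [Y.Normal] (hX : centralizer (Opi πᶜ G : Set G) ⊓ X ≤ Opi πᶜ G)
    (hXY : Nat.IsPiNumber π (X.relIndex Y) ∨ Nat.IsPiNumber πᶜ (X.relIndex Y)) :
    centralizer (Opi πᶜ G : Set G) ⊓ Y ≤ Opi πᶜ G := by
  set F := Opi πᶜ G
  set C := centralizer (F : Set G)
  set Z := C ⊓ F
  set K := Z ⊔ (C ⊓ Y)
  have hZK : Z ≤ K := le_sup_left
  have hKC : K ≤ C := sup_le inf_le_left inf_le_left
  have hdvd : Z.relIndex K ∣ X.relIndex Y := relIndex_sup_inf_dvd (le_inf inf_le_left hX)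
  refine (le_sup_right : C ⊓ Y ≤ K).trans ?_
  rcases hXY with hπ | hπ'
  · have hKZ : K ≤ centralizer Z := hKC.trans (centralizer_le inf_le_right)
    exact (le_of_le_centralizer_of_isPiNumber_relIndex hbot hZK hKZ (hπ.of_dvd hdvd)).trans
      inf_le_right
  · refine le_Opi inferInstance ?_
    rw [← card_mul_relIndex hZK]
    exact (isPiNumber_card_Opi.of_dvd (card_dvd_of_le inf_le_right)).mul (hπ'.of_dvd hdvd)

theorem IsPiSeparable.centralizer_Opi_compl_le (hsep : IsPiSeparable π G)
    (hbot : Opi π G = ⊥) : centralizer (Opi πᶜ G : Set G) ≤ Opi πᶜ G := by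
  obtain ⟨n, H, -, h0, htop, hnorm, hfac⟩ := hsep
  have key : ∀ i, centralizer (Opi πᶜ G : Set G) ⊓ H i ≤ Opi πᶜ G := by
    intro i
    induction i using Fin.induction with
    | zero => simp [h0]
    | succ i ih =>
      have := hnorm i.castSucc
      have := hnorm i.succ
      exact centralizer_inf_le_Opi_compl hbot ih (hfac i)
  simpa [htop] using key (Fin.last n)

end HallHigman

theorem stmt_10_general (π : Set ℕ) (G : Type) [Group G] [Finite G] (hsep : IsPiSeparable π G)
    (g : G) (hg : Nat.IsPiNumber π (orderOf g))
    (hcp : ∀ x ∈ Opipi' π G, ∃ n ∈ Opipi' π G, g * x * g⁻¹ = n * x * n⁻¹) :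
    g ∈ Opipi' π G := by
  set f := QuotientGroup.mk' (Opi π G)
  set F := Opi πᶜ (G ⧸ Opi π G)
  set φ : MulAut F := MulAut.conjNormal (f g)
  have hφ : φ ∈ MulAut.classPreserving F :=
    MulAut.conjNormal_mem_classPreserving_of_surjective (QuotientGroup.mk'_surjective _) hcp
  have hord : Nat.IsPiNumber π (orderOf φ) :=
    hg.of_dvd ((orderOf_map_dvd _ _).trans (orderOf_map_dvd _ _))
  have hφ1 : φ = 1 := MulAut.eq_one_of_mem_classPreserving hφ hord isPiNumber_card_Opi
  have hcent : f g ∈ centralizer (F : Set (G ⧸ Opi π G)) := by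
    refine mem_centralizer_iff.mpr fun y hy => ?_
    have := congrArg Subtype.val (DFunLike.congr_fun hφ1 ⟨y, hy⟩)
    simp only [φ, MulAut.conjNormal_apply, MulAut.one_apply, mul_inv_eq_iff_eq_mul] at this
    exact this.symm
  exact (hsep.of_surjective (QuotientGroup.mk'_surjective _)).centralizer_Opi_compl_le
    (Opi_quotient_Opi_eq_bot π G) hcent

/-- Let `G` be `π`-separable with `O_{π'}(G) = 1`. If a `π`-element `g` of `G` induces a
class-preserving automorphism of `N := O_{ππ'}(G)`, then `g ∈ N`. -/
theorem stmt_10 (π : Set ℕ) (G : Type) [Group G] [Finite G] (hsep : IsPiSeparable π G)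
    (h1 : Opi πᶜ G = ⊥) (g : G) (hg : Nat.IsPiNumber π (orderOf g))
    (hcp : ∀ x ∈ Opipi' π G, ∃ n ∈ Opipi' π G, g * x * g⁻¹ = n * x * n⁻¹) :
    g ∈ Opipi' π G :=
  stmt_10_general π G hsep g hg hcp
end

section
/- Let G be a finite group with a normal subgroup N such that k(G) = k(N)·k(G/N), N is abelian, and G/N is abelian. Then N ≤ Z(G), and in particular G is nilpotent of class at most 2. -/
/-!
Abelian groups are exactly the finite groups with `k(G) = |G|`, i.e. with commuting
probability `1`. Hence `k(N) = |N|` and `k(G/N) = |G/N|`, so the hypothesis reads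
`k(G) = |N| |G/N| = |G|` and `G` itself is abelian.
-/

theorem card_conjClasses_eq_card_iff {G : Type*} [Group G] [Finite G] :
    Nat.card (ConjClasses G) = Nat.card G ↔ IsMulCommutative G := by
  rw [← commProb_eq_one_iff, commProb_def',
    div_eq_one_iff_eq (Nat.cast_ne_zero.mpr Nat.card_pos.ne'), Nat.cast_inj]

theorem isMulCommutative_of_card_conjClasses_eq_mul {G : Type*} [Group G] [Finite G]
    (N : Subgroup G) [N.Normal] [IsMulCommutative N] [IsMulCommutative (G ⧸ N)]
    (h : Nat.card (ConjClasses G) =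
      Nat.card (ConjClasses N) * Nat.card (ConjClasses (G ⧸ N))) :
    IsMulCommutative G := by
  rwa [card_conjClasses_eq_card_iff.mpr (‹_› : IsMulCommutative N),
    card_conjClasses_eq_card_iff.mpr (‹_› : IsMulCommutative (G ⧸ N)), mul_comm,
    ← Subgroup.card_eq_card_quotient_mul_card_subgroup, card_conjClasses_eq_card_iff] at h

theorem Subgroup.top_lowerCentralSeries_two_eq_bot {G : Type*} [Group G] [IsMulCommutative G] :
    (⊤ : Subgroup G).lowerCentralSeries 2 = ⊥ :=
  le_bot_iff.mp <| (lowerCentralSeries_antitone ⊤ (by norm_num : 1 ≤ 2)).trans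
    (lowerCentralSeries_one_eq_bot_iff.mpr ‹_›).le

/-- If `N ⊴ G` with `k(G) = k(N)·k(G/N)`, `N` abelian and `G/N` abelian, then
`N ≤ Z(G)` and `G` is nilpotent of class at most `2`. -/
theorem stmt_16 (G : Type) [Group G] [Finite G] (N : Subgroup G) [N.Normal]
    (h : Nat.card (ConjClasses G) =
      Nat.card (ConjClasses N) * Nat.card (ConjClasses (G ⧸ N)))
    (hN : ∀ a b : N, a * b = b * a) (hQ : ∀ a b : G ⧸ N, a * b = b * a) :
    N ≤ Subgroup.center G ∧ Group.IsNilpotent G ∧ (⊤ : Subgroup G).lowerCentralSeries 2 = ⊥ := by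
  have : IsMulCommutative N := ⟨⟨hN⟩⟩
  have : IsMulCommutative (G ⧸ N) := ⟨⟨hQ⟩⟩
  have : IsMulCommutative G := isMulCommutative_of_card_conjClasses_eq_mul N h
  have hlower : (⊤ : Subgroup G).lowerCentralSeries 2 = ⊥ :=
    Subgroup.top_lowerCentralSeries_two_eq_bot
  exact ⟨Subgroup.center_eq_top (G := G) ▸ le_top,
    Subgroup.nilpotent_iff_lowerCentralSeries.mpr ⟨2, hlower⟩, hlower⟩
end

section
/- Let G = PSL(2,32) ⋊ C₅ where C₅ acts by field automorphisms, and let π = {2,3,11,31}. Then O_π(G) = PSL(2,32), and G has at least 5 irreducible characters χ with χ(1) coprime to every prime in π. -/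
open scoped Classical

open Matrix

/-! In characteristic 2 the centre of `SL(2, q)` is trivial, so `PSL(2, 32)` has order
`q (q² - 1) = 2⁵ · 3 · 11 · 31`. Hence it is a normal `π`-subgroup of `G` whose quotient
`G / PSL(2, 32) ≅ C₅` is a `π'`-group, so it contains every normal `π`-subgroup. Pulling back
the five characters of `C₅` gives five distinct linear characters of `G`, irreducible because
`∑ χ(g) χ(g⁻¹) = |G|`. -/

namespace Nat

theorem isPiNumber_iff_forall_mem_primeFactorsList {π : Set ℕ} {n : ℕ} (hn : n ≠ 0) :
    IsPiNumber π n ↔ ∀ p ∈ n.primeFactorsList, p ∈ π := by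
  simp only [IsPiNumber, mem_primeFactorsList hn, and_imp]

theorem IsPiNumber.coprime_of_isPiNumber_compl {π : Set ℕ} {m n : ℕ} (hm : IsPiNumber π m)
    (hn : IsPiNumber πᶜ n) : Coprime m n :=
  coprime_of_dvd fun p hp hpm hpn => hn p hp hpn (hm p hp hpm)

end Nat

theorem Opi_eq_of_isPiNumber_compl_index {G : Type*} [Group G] [Finite G] {π : Set ℕ}
    (N : Subgroup G) [N.Normal] (hN : Nat.IsPiNumber π (Nat.card N))
    (hindex : Nat.IsPiNumber πᶜ N.index) : Opi π G = N := by
  refine le_antisymm (Subgroup.normalClosure_le_normal ?_)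
    (fun x hx => Subgroup.subset_normalClosure (Set.mem_biUnion ⟨‹_›, hN⟩ hx))
  simp only [Set.iUnion_subset_iff]
  rintro M ⟨-, hM⟩ x hx
  have hM' : Nat.IsPiNumber π (orderOf (x : G ⧸ N)) := fun p hp hpx =>
    hM p hp <| hpx.trans <|
      (orderOf_map_dvd (QuotientGroup.mk' N) x).trans (M.orderOf_dvd_natCard hx)
  have hindex' : Nat.IsPiNumber πᶜ (orderOf (x : G ⧸ N)) := fun p hp hpx =>
    hindex p hp (hpx.trans (orderOf_dvd_natCard _))
  rw [SetLike.mem_coe, ← QuotientGroup.eq_one_iff, ← orderOf_eq_one_iff]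
  exact (Nat.coprime_self _).mp (hM'.coprime_of_isPiNumber_compl hindex')

namespace SemidirectProduct

variable {N H : Type*} [Group N] [Group H] {φ : H →* MulAut N}

instance [Finite N] [Finite H] : Finite (N ⋊[φ] H) :=
  Finite.of_equiv _ equivProd.symm

instance normal_range_inl : (inl : N →* N ⋊[φ] H).range.Normal :=
  range_inl_eq_ker_rightHom (φ := φ) ▸ MonoidHom.normal_ker _

theorem card_range_inl : Nat.card (inl : N →* N ⋊[φ] H).range = Nat.card N :=
  Nat.card_congr (MonoidHom.ofInjective inl_injective).toEquiv.symm

theorem index_range_inl : (inl : N →* N ⋊[φ] H).range.index = Nat.card H := by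
  rw [range_inl_eq_ker_rightHom, Subgroup.index_ker,
    MonoidHom.range_eq_top.mpr rightHom_surjective, Subgroup.card_top]

end SemidirectProduct

namespace Matrix

theorem GeneralLinearGroup.ker_det_eq_range_toGL (n R : Type*) [Fintype n] [DecidableEq n]
    [CommRing R] :
    (GeneralLinearGroup.det : GL n R →* Rˣ).ker =
      (SpecialLinearGroup.toGL (n := n) (R := R)).range := by
  ext g
  rw [MonoidHom.mem_ker, MonoidHom.mem_range]
  refine ⟨fun hg => ⟨⟨g, congrArg Units.val hg⟩, Units.ext rfl⟩, ?_⟩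
  rintro ⟨A, rfl⟩
  exact SpecialLinearGroup.coeToGL_det A

theorem card_specialLinearGroup_mul (n F : Type*) [Fintype n] [DecidableEq n] [Nonempty n]
    [Field F] [Finite F] :
    Nat.card (SpecialLinearGroup n F) * (Nat.card F - 1) = Nat.card (GL n F) := by
  rw [← Subgroup.card_mul_index (GeneralLinearGroup.det : GL n F →* Fˣ).ker, Subgroup.index_ker,
    MonoidHom.range_eq_top.mpr GeneralLinearGroup.det_surjective, Subgroup.card_top,
    Nat.card_units, GeneralLinearGroup.ker_det_eq_range_toGL,
    Nat.card_congr (MonoidHom.ofInjective SpecialLinearGroup.toGL_injective).toEquiv]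

theorem SpecialLinearGroup.center_eq_bot_of_card_eq_expChar {n R : Type*} [Fintype n]
    [DecidableEq n] [CommRing R] [IsReduced R] {p : ℕ} [ExpChar R p] (hn : Fintype.card n = p) :
    Subgroup.center (SpecialLinearGroup n R) = ⊥ := by
  have hmax : max (Fintype.card n) 1 = p ^ 1 * 1 := by
    rw [hn, pow_one, mul_one, max_eq_left (expChar_pos R p)]
  have : Subsingleton (Subgroup.center (SpecialLinearGroup n R)) := by
    refine (center_equiv_rootsOfUnity (n := n) (R := R)).toEquiv.subsingleton_congr.mpr ⟨?_⟩
    rintro ⟨ζ, hζ⟩ ⟨ξ, hξ⟩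
    rw [hmax, mem_rootsOfUnity_prime_pow_mul_iff, rootsOfUnity_one, Subgroup.mem_bot] at hζ hξ
    simp [hζ, hξ]
  exact Subgroup.eq_bot_of_subsingleton _

theorem card_projectiveSpecialLinearGroup_fin_two_of_charTwo (F : Type*) [Field F] [Finite F]
    [CharP F 2] :
    Nat.card (ProjectiveSpecialLinearGroup (Fin 2) F) = Nat.card F * (Nat.card F ^ 2 - 1) := by
  have := Fintype.ofFinite F
  have hSL := card_specialLinearGroup_mul (Fin 2) F
  have hq : 1 < Nat.card F := Finite.one_lt_card
  have hsq : Nat.card F ^ 2 - Nat.card F = Nat.card F * (Nat.card F - 1) := by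
    rw [Nat.mul_sub_one, sq]
  rw [card_GL_field, ← Nat.card_eq_fintype_card, Fin.prod_univ_two] at hSL
  simp only [Fin.val_zero, Fin.val_one, pow_zero, pow_one, hsq] at hSL
  rw [ProjectiveSpecialLinearGroup, ← Subgroup.index,
    SpecialLinearGroup.center_eq_bot_of_card_eq_expChar (p := 2) (by simp), Subgroup.index_bot]
  exact Nat.eq_of_mul_eq_mul_right (by omega) (hSL.trans (by ring))

end Matrix

namespace FDRep

universe u
variable {k G : Type u} [Field k] [Group G]

noncomputable def ofMonoidHom (χ : G →* k) : FDRep k G :=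
  FDRep.of ((algebraMap k (Module.End k k)).toMonoidHom.comp χ)

theorem finrank_ofMonoidHom (χ : G →* k) : Module.finrank k (ofMonoidHom χ) = 1 :=
  Module.finrank_self k

theorem character_ofMonoidHom (χ : G →* k) : (ofMonoidHom χ).character = χ := by
  ext g
  change LinearMap.trace k k (algebraMap k (Module.End k k) (χ g)) = χ g
  simp [Module.algebraMap_end_eq_smul_id]

theorem simple_ofMonoidHom [IsAlgClosed k] [CharZero k] [Fintype G] (χ : G →* k) :
    CategoryTheory.Simple (ofMonoidHom χ) := by
  rw [simple_iff_char_is_norm_one, character_ofMonoidHom]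
  simp_rw [← map_mul, mul_inv_cancel, map_one]
  simp

end FDRep

theorem AddChar.injective_toMonoidHom_comp {G A M : Type*} [Group G] [AddMonoid A] [Monoid M]
    {f : G →* Multiplicative A} (hf : Function.Surjective f) :
    Function.Injective fun ψ : AddChar A M => ψ.toMonoidHom.comp f := fun _ _ h =>
  AddChar.toMonoidHomEquiv.injective ((MonoidHom.cancel_right hf).mp h)

theorem stmt_18_general (π : Set ℕ) (hπ : π = {2, 3, 11, 31})
    (φ : Multiplicative (ZMod 5) →* MulAut (ProjectiveSpecialLinearGroup (Fin 2) (GaloisField 2 5)))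
 :
    Opi π (ProjectiveSpecialLinearGroup (Fin 2) (GaloisField 2 5) ⋊[φ] Multiplicative (ZMod 5)) =
      (SemidirectProduct.inl (φ := φ)).range ∧
    ∃ V : Fin 5 →
        FDRep ℂ (ProjectiveSpecialLinearGroup (Fin 2) (GaloisField 2 5) ⋊[φ] Multiplicative (ZMod 5)),
      (∀ i, CategoryTheory.Simple (V i)) ∧
      (∀ i j, i ≠ j → FDRep.character (V i) ≠ FDRep.character (V j)) ∧
      ∀ i, ∀ p ∈ π, Nat.Coprime p (Module.finrank ℂ (V i)) := by
  subst hπ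
  refine ⟨Opi_eq_of_isPiNumber_compl_index _ ?_ ?_, ?_⟩
  · rw [SemidirectProduct.card_range_inl, card_projectiveSpecialLinearGroup_fin_two_of_charTwo,
      GaloisField.card 2 5 (by norm_num),
      Nat.isPiNumber_iff_forall_mem_primeFactorsList (by norm_num)]
    simp
  · rw [SemidirectProduct.index_range_inl, Nat.card_eq_fintype_card, Fintype.card_multiplicative,
      ZMod.card, Nat.isPiNumber_iff_forall_mem_primeFactorsList (by norm_num)]
    simp
  · have := Fintype.ofFinite
      (ProjectiveSpecialLinearGroup (Fin 2) (GaloisField 2 5) ⋊[φ] Multiplicative (ZMod 5))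
    let ψ : Fin 5 ≃ AddChar (ZMod 5) ℂ := (Fintype.equivFinOfCardEq (by simp)).symm
    let χ i := (ψ i).toMonoidHom.comp (SemidirectProduct.rightHom (φ := φ))
    refine ⟨fun i => FDRep.ofMonoidHom (χ i), fun i => FDRep.simple_ofMonoidHom _, ?_, ?_⟩
    · intro i j hij hχ
      rw [FDRep.character_ofMonoidHom, FDRep.character_ofMonoidHom] at hχ
      exact hij <| ψ.injective <| AddChar.injective_toMonoidHom_comp
        SemidirectProduct.rightHom_surjective (DFunLike.coe_injective hχ)
    · intro i p _
      rw [FDRep.finrank_ofMonoidHom]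
      exact Nat.coprime_one_right p

/-- Let `G = PSL(2,32) ⋊ C₅` where `C₅` acts by field automorphisms, and
`π = {2,3,11,31}`. Then `O_π(G) = PSL(2,32)` and `G` has at least `5` distinct
irreducible (complex) characters whose degree is coprime to every prime in `π`. -/
theorem stmt_18 (π : Set ℕ) (hπ : π = {2, 3, 11, 31})
    (φ : Multiplicative (ZMod 5) →* MulAut (ProjectiveSpecialLinearGroup (Fin 2) (GaloisField 2 5)))
    (hinj : Function.Injective φ)
    (hfield : ∀ a : Multiplicative (ZMod 5),
      ∃ e : GaloisField 2 5 ≃+* GaloisField 2 5,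
        ∀ g : SpecialLinearGroup (Fin 2) (GaloisField 2 5),
          φ a (QuotientGroup.mk g) =
            QuotientGroup.mk (SpecialLinearGroup.map (n := Fin 2) e.toRingHom g)) :
    Opi π (ProjectiveSpecialLinearGroup (Fin 2) (GaloisField 2 5) ⋊[φ] Multiplicative (ZMod 5)) =
      (SemidirectProduct.inl (φ := φ)).range ∧
    ∃ V : Fin 5 →
        FDRep ℂ (ProjectiveSpecialLinearGroup (Fin 2) (GaloisField 2 5) ⋊[φ] Multiplicative (ZMod 5)),
      (∀ i, CategoryTheory.Simple (V i)) ∧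
      (∀ i j, i ≠ j → FDRep.character (V i) ≠ FDRep.character (V j)) ∧
      ∀ i, ∀ p ∈ π, Nat.Coprime p (Module.finrank ℂ (V i)) :=
  stmt_18_general π hπ φ
end
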